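/- Let $T$ be a first-countable topological space, $\Omega \subset \mathbb{C}$ open, and $h : T \times \Omega \to \mathbb{C}$ continuous with each section $h_t$ holomorphic. Then the function $(t, z) \mapsto h_t'(z)$ is continuous on $T \times \Omega$. -/

import Mathlib

/-!
Near `t₀`, continuity of `h` on `T × Ω` and compactness of closed discs in `Ω` make `h t → h t₀`
locally uniformly on `Ω`. By Weierstrass, `h t' → h t₀'` locally uniformly on `Ω` as well, and
locally uniform convergence to a limit that is continuous at `z₀` yields joint continuity at
`(t₀, z₀)`.
-/

open Filter Set Topology

section UniformlyOnCompact

variable {α β E : Type*} [TopologicalSpace α] [TopologicalSpace β] [UniformSpace E]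
  {f : α → β → E} {s : Set α} {q : α}

theorem IsCompact.tendstoUniformlyOn_of_continuousOn_prod {k : Set β} (hk : IsCompact k)
    (hf : ContinuousOn f.uncurry (s ×ˢ k)) (hq : q ∈ s) :
    TendstoUniformlyOn f (f q) (𝓝[s] q) k := by
  intro u hu
  obtain ⟨v, hv, hvu⟩ := hk.mem_uniformity_of_prod hf hq (symmetrize_mem_uniformity hu)
  filter_upwards [hv] with p hp x hx
  exact (hvu p hp x hx).2

theorem ContinuousOn.tendstoLocallyUniformlyOn_of_prod [LocallyCompactSpace β] {U : Set β}
    (hU : IsOpen U) (hf : ContinuousOn f.uncurry (s ×ˢ U)) (hq : q ∈ s) :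
    TendstoLocallyUniformlyOn f (f q) (𝓝[s] q) U :=
  (tendstoLocallyUniformlyOn_iff_forall_isCompact hU).2 fun _k hkU hk =>
    hk.tendstoUniformlyOn_of_continuousOn_prod (hf.mono (prod_mono subset_rfl hkU)) hq

end UniformlyOnCompact

theorem TendstoLocallyUniformlyOn.continuousWithinAt_uncurry {α β E : Type*}
    [TopologicalSpace α] [TopologicalSpace β] [UniformSpace E] {F : α → β → E} {s : Set α}
    {U : Set β} {q : α} {x : β} (hF : TendstoLocallyUniformlyOn F (F q) (𝓝[s] q) U)
    (hc : ContinuousWithinAt (F q) U x) (hx : x ∈ U) :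
    ContinuousWithinAt F.uncurry (s ×ˢ U) (q, x) := by
  rw [ContinuousWithinAt, nhdsWithin_prod_eq]
  refine tendsto_comp_of_locally_uniform_limit_within (F := fun p : α × β => F p.1) hc tendsto_snd
    fun u hu => ?_
  obtain ⟨t, ht, hev⟩ := hF u hu x hx
  exact ⟨t, ht, tendsto_fst.eventually hev⟩

theorem deriv_jointly_continuous_general
    {T : Type*} [TopologicalSpace T]
    (Ω : Set ℂ) (hΩ : IsOpen Ω)
    (h : T → ℂ → ℂ)
    (hcont : ContinuousOn (fun p : T × ℂ => h p.1 p.2) (Set.univ ×ˢ Ω))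
    (hhol : ∀ t : T, DifferentiableOn ℂ (h t) Ω) :
    ContinuousOn (fun p : T × ℂ => deriv (h p.1) p.2) (Set.univ ×ˢ Ω) := by
  rintro ⟨t₀, z₀⟩ ⟨-, hz₀⟩
  have hunif : TendstoLocallyUniformlyOn h (h t₀) (𝓝[univ] t₀) Ω :=
    hcont.tendstoLocallyUniformlyOn_of_prod hΩ (mem_univ t₀)
  have hderiv : TendstoLocallyUniformlyOn (deriv ∘ h) (deriv (h t₀)) (𝓝[univ] t₀) Ω :=
    hunif.deriv (.of_forall hhol) hΩ
  have hderiv_cont : ContinuousOn (deriv (h t₀)) Ω :=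
    ((hhol t₀).analyticOnNhd hΩ).deriv.continuousOn
  exact hderiv.continuousWithinAt_uncurry (hderiv_cont z₀ hz₀) hz₀

/-- If `h : T × Ω → ℂ` is continuous with holomorphic sections, then
`(t, z) ↦ (h t)'(z)` is continuous on `T × Ω`. -/
theorem deriv_jointly_continuous
    {T : Type*} [TopologicalSpace T] [FirstCountableTopology T]
    (Ω : Set ℂ) (hΩ : IsOpen Ω)
    (h : T → ℂ → ℂ)
    (hcont : ContinuousOn (fun p : T × ℂ => h p.1 p.2) (Set.univ ×ˢ Ω))
    (hhol : ∀ t : T, DifferentiableOn ℂ (h t) Ω) :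
    ContinuousOn (fun p : T × ℂ => deriv (h p.1) p.2) (Set.univ ×ˢ Ω) :=
  deriv_jointly_continuous_general Ω hΩ h hcont hhol
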